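/- Fix n ≥ 1, J ∈ ℕ, λ ∈ ℂ, and families (Â₁,_m), (Â₀,_m), (B̂₀,_m) of n×n complex matrices. With 𝒦_J(λ) := −(𝒟_J² − I)^{-1}(𝒟_J𝒜₁,J + 𝒜₀,J − λℬ₀,J + I) in the notation below, one has tr 𝒦_J(λ) = ( tr Â₀,₀ + n − λ·tr B̂₀,₀ ) · ∑_{|j|≤J} 1/(j² + 1). In particular, the contributions of Â₁,₀ cancel by oddness of j ↦ ij/(j²+1). -/

import Mathlib

open Complex Matrix Finset

def jv (J : ℕ) (a : Fin (2 * J + 1)) : ℤ := ((a : ℕ) : ℤ) - (J : ℤ)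

def blockToeplitz (J n : ℕ) (A : ℤ → Matrix (Fin n) (Fin n) ℂ) :
    Matrix (Fin (2 * J + 1) × Fin n) (Fin (2 * J + 1) × Fin n) ℂ :=
  fun p q => A (jv J p.1 - jv J q.1) p.2 q.2

noncomputable def fourierD (J n : ℕ) :
    Matrix (Fin (2 * J + 1) × Fin n) (Fin (2 * J + 1) × Fin n) ℂ :=
  Matrix.diagonal fun p => Complex.I * ((jv J p.1 : ℤ) : ℂ)

noncomputable def KJ (J n : ℕ) (A1 A0 B0 : ℤ → Matrix (Fin n) (Fin n) ℂ) (lam : ℂ) :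
    Matrix (Fin (2 * J + 1) × Fin n) (Fin (2 * J + 1) × Fin n) ℂ :=
  -(((fourierD J n) ^ 2 - 1)⁻¹ *
    (fourierD J n * blockToeplitz J n A1 +
      (blockToeplitz J n A0 - lam • blockToeplitz J n B0) + 1))

/-!
Since `𝒟_J² − I = −diag(j² + 1)` is diagonal, the trace of `𝒦_J(λ)` only sees the diagonal
blocks `Â₁,₀`, `Â₀,₀`, `B̂₀,₀`, `I` of the matrix it multiplies, weighted by `1/(j² + 1)` and, for
`Â₁,₀`, by `ij/(j² + 1)`. The latter weight is odd in `j`, so it sums to zero over `|j| ≤ J`.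
-/

lemma sum_fin_jv_eq_sum_Icc {M : Type*} [AddCommMonoid M] (J : ℕ) (f : ℤ → M) :
    ∑ a : Fin (2 * J + 1), f (jv J a) = ∑ j ∈ Icc (-(J : ℤ)) J, f j := by
  refine sum_nbij' (jv J) (fun j => ⟨min (j + J).toNat (2 * J), by omega⟩)
    (fun a _ => ?_) (fun _ _ => mem_univ _) (fun a _ => ?_) (fun j hj => ?_) fun _ _ => rfl
  · have := a.isLt
    simp only [jv, mem_Icc]
    omega
  · have := a.isLt
    ext
    simp only [jv, sub_add_cancel, Int.toNat_natCast]
    omega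
  · rw [mem_Icc] at hj
    simp only [jv, Nat.cast_min, Int.ofNat_toNat]
    omega

lemma map_neg_Icc_neg_self (N : ℤ) :
    (Icc (-N) N).map (Equiv.neg ℤ).toEmbedding = Icc (-N) N := by
  ext j
  simp only [mem_map_equiv, Equiv.neg_symm, Equiv.neg_apply, mem_Icc, neg_le_neg_iff]
  omega

lemma intCast_sq_add_one_ne_zero (j : ℤ) : (j : ℂ) ^ 2 + 1 ≠ 0 := by
  exact_mod_cast (by positivity : j ^ 2 + 1 ≠ 0)

lemma sum_Icc_inv_sq_add_one_mul_I_mul (N : ℕ) :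
    ∑ j ∈ Icc (-(N : ℤ)) N, ((j : ℂ) ^ 2 + 1)⁻¹ * (I * j) = 0 :=
  Function.Odd.finsetSum_eq_zero (fun j => by push_cast; ring) (map_neg_Icc_neg_self N)

section

variable {J n : ℕ}

lemma fourierD_sq_sub_one :
    fourierD J n ^ 2 - 1 = diagonal fun p => -(((jv J p.1 : ℤ) : ℂ) ^ 2 + 1) := by
  rw [sq, fourierD, diagonal_mul_diagonal, ← diagonal_one, diagonal_sub]
  congr 1; funext p
  linear_combination ((jv J p.1 : ℤ) : ℂ) ^ 2 * I_mul_I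

lemma inv_fourierD_sq_sub_one :
    (fourierD J n ^ 2 - 1)⁻¹ = -diagonal fun p => (((jv J p.1 : ℤ) : ℂ) ^ 2 + 1)⁻¹ := by
  rw [fourierD_sq_sub_one, ← diagonal_neg]
  refine inv_eq_left_inv ?_
  rw [neg_mul_neg, diagonal_mul_diagonal, ← diagonal_one]
  congr 1; funext p
  simp [intCast_sq_add_one_ne_zero]

lemma diagonal_fst_mul_fourierD (w : Fin (2 * J + 1) → ℂ) :
    diagonal (fun p : Fin (2 * J + 1) × Fin n => w p.1) * fourierD J n =
      diagonal fun p => w p.1 * (I * ((jv J p.1 : ℤ) : ℂ)) := by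
  rw [fourierD, diagonal_mul_diagonal]

lemma trace_diagonal_fst (w : Fin (2 * J + 1) → ℂ) :
    (diagonal fun p : Fin (2 * J + 1) × Fin n => w p.1).trace = (∑ a, w a) * n := by
  rw [trace_diagonal, Fintype.sum_prod_type, sum_mul]
  simp only [sum_const, card_univ, Fintype.card_fin, nsmul_eq_mul, mul_comm]

lemma trace_diagonal_fst_mul_blockToeplitz (w : Fin (2 * J + 1) → ℂ)
    (A : ℤ → Matrix (Fin n) (Fin n) ℂ) :
    (diagonal (fun p : Fin (2 * J + 1) × Fin n => w p.1) * blockToeplitz J n A).trace =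
      (∑ a, w a) * (A 0).trace := by
  simp only [trace, diag_apply, diagonal_mul, blockToeplitz, sub_self, Fintype.sum_prod_type,
    mul_sum, sum_mul]
  exact sum_comm

end

theorem trace_of_truncated_second_order_BS_general
    (n : ℕ) (J : ℕ) (lam : ℂ)
    (A1 A0 B0 : ℤ → Matrix (Fin n) (Fin n) ℂ) :
    (KJ J n A1 A0 B0 lam).trace =
      ((A0 0).trace + (n : ℂ) - lam * (B0 0).trace) *
        ∑ j ∈ Finset.Icc (-(J : ℤ)) (J : ℤ), (((j : ℂ)) ^ 2 + 1)⁻¹ := by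
  let w : Fin (2 * J + 1) → ℂ := fun a => (((jv J a : ℤ) : ℂ) ^ 2 + 1)⁻¹
  have hK : KJ J n A1 A0 B0 lam =
      (diagonal fun p => w p.1 * (I * jv J p.1)) * blockToeplitz J n A1 +
        ((diagonal fun p => w p.1) * blockToeplitz J n A0 -
          lam • ((diagonal fun p => w p.1) * blockToeplitz J n B0)) +
        diagonal fun p => w p.1 := by
    rw [KJ, inv_fourierD_sq_sub_one, neg_mul, neg_neg, mul_add, mul_add, mul_sub, ← mul_assoc,
      diagonal_fst_mul_fourierD w, mul_smul_comm, mul_one]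
  have hodd : ∑ a, w a * (I * jv J a) = 0 :=
    (sum_fin_jv_eq_sum_Icc J _).trans (sum_Icc_inv_sq_add_one_mul_I_mul J)
  rw [hK, trace_add, trace_add, trace_sub, trace_smul,
    trace_diagonal_fst_mul_blockToeplitz (fun a => w a * (I * jv J a)), hodd,
    trace_diagonal_fst_mul_blockToeplitz w, trace_diagonal_fst_mul_blockToeplitz w,
    trace_diagonal_fst w, sum_fin_jv_eq_sum_Icc J fun j => ((j : ℂ) ^ 2 + 1)⁻¹, smul_eq_mul]
  ring

/-- The trace of the truncated second-order Birman–Schwinger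
matrix is `tr 𝒦_J(λ) = (tr Â₀,₀ + n − λ tr B̂₀,₀) ∑_{|j|≤J} 1/(j²+1)`; the
contributions of `Â₁,₀` cancel by oddness of `j ↦ ij/(j²+1)`. -/
theorem trace_of_truncated_second_order_BS
    (n : ℕ) (hn : 1 ≤ n) (J : ℕ) (lam : ℂ)
    (A1 A0 B0 : ℤ → Matrix (Fin n) (Fin n) ℂ) :
    (KJ J n A1 A0 B0 lam).trace =
      ((A0 0).trace + (n : ℂ) - lam * (B0 0).trace) *
        ∑ j ∈ Finset.Icc (-(J : ℤ)) (J : ℤ), (((j : ℂ)) ^ 2 + 1)⁻¹ :=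
  trace_of_truncated_second_order_BS_general n J lam A1 A0 B0
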